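/- Let f satisfy the self-referential equation f = S·(f∘L_w^{-1}) + q on each D_w, with S Lipschitz with constant λ_S and q Lipschitz with constant λ_q on D, and M_f = sup_D|f|. Set β = √2(2λ_S M_f + λ_q)|I|. Then for any n, k ∈ ℤ⁺ and any word 𝐰 ∈ Σⁿ: O_k(f, D_𝐰) ≤ Σ_{w'∈Σ} s̄_{𝐰w'} · O_{k-1}(f, D_{σ(𝐰)w'}) + β N^{k-n}, where s̄_𝐯 = sup_{D_𝐯}|S| and σ(𝐰) deletes the first letter of 𝐰. -/

import Mathlib

open scoped BigOperators

noncomputable def oscil (φ : ℝ × ℝ → ℝ) (E : Set (ℝ × ℝ)) : ℝ :=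
  sSup ((fun p : (ℝ × ℝ) × (ℝ × ℝ) => φ p.1 - φ p.2) '' (E ×ˢ E))

noncomputable def eudist (s t : ℝ × ℝ) : ℝ :=
  Real.sqrt ((s.1 - t.1) ^ 2 + (s.2 - t.2) ^ 2)

noncomputable def uMap (x0 len : ℝ) (N : ℕ) (i : Fin N) (x : ℝ) : ℝ :=
  if i.val % 2 = 0 then x0 + i.val * (len / N) + (x - x0) / N
  else x0 + (i.val + 1) * (len / N) - (x - x0) / N

noncomputable def uInv (x0 len : ℝ) (N : ℕ) (i : Fin N) (y : ℝ) : ℝ :=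
  if i.val % 2 = 0 then x0 + N * (y - (x0 + i.val * (len / N)))
  else x0 + N * ((x0 + (i.val + 1) * (len / N)) - y)

noncomputable def Lmap (x0 y0 len : ℝ) (N : ℕ) (w : Fin N × Fin N) (t : ℝ × ℝ) : ℝ × ℝ :=
  (uMap x0 len N w.1 t.1, uMap y0 len N w.2 t.2)

noncomputable def LInv (x0 y0 len : ℝ) (N : ℕ) (w : Fin N × Fin N) (t : ℝ × ℝ) : ℝ × ℝ :=
  (uInv x0 len N w.1 t.1, uInv y0 len N w.2 t.2)

noncomputable def sqD (x0 y0 len : ℝ) : Set (ℝ × ℝ) :=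
  Set.Icc x0 (x0 + len) ×ˢ Set.Icc y0 (y0 + len)

noncomputable def cell (x0 y0 len : ℝ) (N : ℕ) : List (Fin N × Fin N) → Set (ℝ × ℝ)
  | [] => sqD x0 y0 len
  | w :: ws => Lmap x0 y0 len N w '' cell x0 y0 len N ws

noncomputable def oscSum (x0 y0 len : ℝ) (N : ℕ) (φ : ℝ × ℝ → ℝ)
    (p : List (Fin N × Fin N)) (k : ℕ) : ℝ :=
  ∑ w : Fin k → Fin N × Fin N, oscil φ (cell x0 y0 len N (p ++ List.ofFn w))

noncomputable def supAbs (S : ℝ × ℝ → ℝ) (E : Set (ℝ × ℝ)) : ℝ :=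
  sSup ((fun t => |S t|) '' E)

noncomputable def infAbs (S : ℝ × ℝ → ℝ) (E : Set (ℝ × ℝ)) : ℝ :=
  sInf ((fun t => |S t|) '' E)

section aux
variable {x0 y0 len : ℝ} {N : ℕ}

lemma uInv_uMap (hN : 0 < N) (i : Fin N) (x : ℝ) :
    uInv x0 len N i (uMap x0 len N i x) = x := by
  have hN' : (N : ℝ) ≠ 0 := by positivity
  unfold uInv uMap
  split_ifs <;> field_simp <;> ring

lemma uMap_mem (hlen : 0 < len) (i : Fin N) {x : ℝ} (hx : x ∈ Set.Icc x0 (x0 + len)) :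
    uMap x0 len N i x ∈ Set.Icc x0 (x0 + len) := by
  have hN : 0 < N := i.pos
  have hN' : (0:ℝ) < N := by exact_mod_cast hN
  have h1 : (0:ℝ) ≤ x - x0 := by linarith [hx.1]
  have h2 : x - x0 ≤ len := by linarith [hx.2]
  have hi0 : (0:ℝ) ≤ (i.val : ℝ) := by positivity
  have hi1 : (i.val : ℝ) + 1 ≤ N := by exact_mod_cast i.isLt
  have hd : (0:ℝ) < len / N := by positivity
  have hxd : (0:ℝ) ≤ (x - x0) / N := by positivity
  have hxd2 : (x - x0) / N ≤ len / N := by gcongr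
  have key : ((i.val:ℝ) + 1) * (len / N) ≤ len := by
    have hNd : (N:ℝ) * (len / N) = len := by field_simp
    nlinarith [hd.le]
  have hexp : ((i.val:ℝ) + 1) * (len / N) = (i.val:ℝ) * (len / N) + len / N := by ring
  have him : (0:ℝ) ≤ (i.val:ℝ) * (len / N) := by positivity
  unfold uMap
  split_ifs with h
  · exact ⟨by linarith, by linarith⟩
  · exact ⟨by linarith, by linarith⟩

lemma abs_uMap_sub (hN : 0 < N) (i : Fin N) (x y : ℝ) :
    |uMap x0 len N i x - uMap x0 len N i y| = |x - y| / N := by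
  have hN' : (0:ℝ) < N := by exact_mod_cast hN
  unfold uMap
  split_ifs with h
  · rw [show x0 + ↑i.val * (len / ↑N) + (x - x0) / ↑N - (x0 + ↑i.val * (len / ↑N) + (y - x0) / ↑N)
        = (x - y) / N by ring, abs_div, abs_of_pos hN']
  · rw [show x0 + (↑i.val + 1) * (len / ↑N) - (x - x0) / ↑N -
        (x0 + (↑i.val + 1) * (len / ↑N) - (y - x0) / ↑N) = -((x - y) / N) by ring, abs_neg,
        abs_div, abs_of_pos hN']

lemma eudist_Lmap (hN : 0 < N) (w : Fin N × Fin N) (s t : ℝ × ℝ) :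
    eudist (Lmap x0 y0 len N w s) (Lmap x0 y0 len N w t) = eudist s t / N := by
  have hN' : (0:ℝ) < N := by exact_mod_cast hN
  unfold eudist Lmap
  have h1 := abs_uMap_sub (x0 := x0) (len := len) hN w.1 s.1 t.1
  have h2 := abs_uMap_sub (x0 := y0) (len := len) hN w.2 s.2 t.2
  have e1 : (uMap x0 len N w.1 s.1 - uMap x0 len N w.1 t.1) ^ 2 = (s.1 - t.1) ^ 2 / N ^ 2 := by
    rw [← sq_abs, h1, div_pow, sq_abs]
  have e2 : (uMap y0 len N w.2 s.2 - uMap y0 len N w.2 t.2) ^ 2 = (s.2 - t.2) ^ 2 / N ^ 2 := by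
    rw [← sq_abs, h2, div_pow, sq_abs]
  simp only [e1, e2]
  rw [← add_div, Real.sqrt_div (by positivity), Real.sqrt_sq hN'.le]

lemma cell_subset_sqD (hlen : 0 < len) (l : List (Fin N × Fin N)) :
    cell x0 y0 len N l ⊆ sqD x0 y0 len := by
  induction l with
  | nil => exact subset_rfl
  | cons a l ih =>
    intro s hs
    obtain ⟨t, ht, rfl⟩ := hs
    exact ⟨uMap_mem hlen a.1 (ih ht).1, uMap_mem hlen a.2 (ih ht).2⟩

lemma cell_nonempty (hlen : 0 < len) (l : List (Fin N × Fin N)) :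
    (cell x0 y0 len N l).Nonempty := by
  induction l with
  | nil => exact ⟨(x0, y0), ⟨by constructor <;> linarith, by constructor <;> linarith⟩⟩
  | cons a l ih => exact ih.image _

lemma eudist_sqD {s t : ℝ × ℝ} (hlen : 0 < len) (hs : s ∈ sqD x0 y0 len)
    (ht : t ∈ sqD x0 y0 len) : eudist s t ≤ Real.sqrt 2 * len := by
  have h1 : |s.1 - t.1| ≤ len := by
    rw [abs_le]; constructor <;> [linarith [hs.1.1, ht.1.2]; linarith [hs.1.2, ht.1.1]]
  have h2 : |s.2 - t.2| ≤ len := by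
    rw [abs_le]; constructor <;> [linarith [hs.2.1, ht.2.2]; linarith [hs.2.2, ht.2.1]]
  have : (s.1 - t.1) ^ 2 + (s.2 - t.2) ^ 2 ≤ 2 * len ^ 2 := by
    nlinarith [sq_abs (s.1 - t.1), sq_abs (s.2 - t.2), abs_nonneg (s.1-t.1), abs_nonneg (s.2-t.2)]
  calc eudist s t ≤ Real.sqrt (2 * len ^ 2) := Real.sqrt_le_sqrt this
    _ = Real.sqrt 2 * len := by
        rw [Real.sqrt_mul (by norm_num), Real.sqrt_sq hlen.le]

lemma eudist_cell (hlen : 0 < len) (hN : 0 < N) {l : List (Fin N × Fin N)} {s t : ℝ × ℝ}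
    (hs : s ∈ cell x0 y0 len N l) (ht : t ∈ cell x0 y0 len N l) :
    eudist s t ≤ Real.sqrt 2 * len / N ^ l.length := by
  have hN' : (0:ℝ) < N := by exact_mod_cast hN
  induction l generalizing s t with
  | nil => simpa using eudist_sqD hlen hs ht
  | cons a l ih =>
    obtain ⟨s', hs', rfl⟩ := hs
    obtain ⟨t', ht', rfl⟩ := ht
    rw [eudist_Lmap hN]
    have := ih hs' ht'
    rw [List.length_cons, pow_succ, ← div_div]
    gcongr
    
lemma LInv_Lmap (hN : 0 < N) (w : Fin N × Fin N) (t : ℝ × ℝ) :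
    LInv x0 y0 len N w (Lmap x0 y0 len N w t) = t := by
  unfold LInv Lmap
  simp [uInv_uMap hN]

lemma mem_cell_cons (hN : 0 < N) {a : Fin N × Fin N} {l : List (Fin N × Fin N)} {s : ℝ × ℝ}
    (hs : s ∈ cell x0 y0 len N (a :: l)) : LInv x0 y0 len N a s ∈ cell x0 y0 len N l := by
  obtain ⟨t, ht, rfl⟩ := hs
  rwa [LInv_Lmap hN]

lemma cell_append_subset (hlen : 0 < len) (p l : List (Fin N × Fin N)) :
    cell x0 y0 len N (p ++ l) ⊆ cell x0 y0 len N p := by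
  induction p with
  | nil => simpa [cell] using cell_subset_sqD hlen l
  | cons a p ih => exact Set.image_mono ih

end aux

lemma oscil_le {φ : ℝ × ℝ → ℝ} {E : Set (ℝ × ℝ)} {C : ℝ} (hC : 0 ≤ C)
    (h : ∀ s ∈ E, ∀ t ∈ E, φ s - φ t ≤ C) : oscil φ E ≤ C := by
  apply Real.sSup_le _ hC
  rintro x ⟨⟨s, t⟩, ⟨hs, ht⟩, rfl⟩
  exact h s hs t ht

lemma le_oscil {φ : ℝ × ℝ → ℝ} {E : Set ((ℝ × ℝ))} {M : ℝ} (h : ∀ u ∈ E, |φ u| ≤ M)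
    {s t : ℝ × ℝ} (hs : s ∈ E) (ht : t ∈ E) : φ s - φ t ≤ oscil φ E := by
  apply le_csSup
  · refine ⟨M + M, ?_⟩
    rintro x ⟨⟨a, b⟩, ⟨ha, hb⟩, rfl⟩
    calc φ a - φ b ≤ |φ a| + |φ b| := (le_abs_self _).trans (abs_sub _ _)
      _ ≤ M + M := add_le_add (h a ha) (h b hb)
  · exact ⟨(s, t), ⟨hs, ht⟩, rfl⟩

lemma abs_sub_le_oscil {φ : ℝ × ℝ → ℝ} {E : Set ((ℝ × ℝ))} {M : ℝ} (h : ∀ u ∈ E, |φ u| ≤ M)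
    {s t : ℝ × ℝ} (hs : s ∈ E) (ht : t ∈ E) : |φ s - φ t| ≤ oscil φ E := by
  rw [abs_sub_le_iff]
  exact ⟨le_oscil h hs ht, le_oscil h ht hs⟩

lemma oscil_nonneg {φ : ℝ × ℝ → ℝ} {E : Set ((ℝ × ℝ))} {M : ℝ} (h : ∀ u ∈ E, |φ u| ≤ M)
    (hE : E.Nonempty) : 0 ≤ oscil φ E := by
  obtain ⟨s, hs⟩ := hE
  have := le_oscil h hs hs
  linarith

lemma le_supAbs {S : ℝ × ℝ → ℝ} {E : Set ((ℝ × ℝ))} {M : ℝ} (h : ∀ u ∈ E, |S u| ≤ M)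
    {t : ℝ × ℝ} (ht : t ∈ E) : |S t| ≤ supAbs S E := by
  apply le_csSup
  · exact ⟨M, by rintro x ⟨a, ha, rfl⟩; exact h a ha⟩
  · exact Set.mem_image_of_mem _ ht

lemma supAbs_nonneg {S : ℝ × ℝ → ℝ} {E : Set ((ℝ × ℝ))} {M : ℝ} (h : ∀ u ∈ E, |S u| ≤ M)
    (hE : E.Nonempty) : 0 ≤ supAbs S E := by
  obtain ⟨t, ht⟩ := hE
  exact (abs_nonneg _).trans (le_supAbs h ht)

set_option maxHeartbeats 2000000 in
/-- recursion inequality (upper) for oscillation sums of the FIF. -/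
theorem oscSum_recursion_upper (x0 y0 len : ℝ) (hlen : 0 < len) (N : ℕ) (hN : 2 ≤ N)
    (f S q : ℝ × ℝ → ℝ) (lamS lamq : ℝ) (hlamS : 0 < lamS) (hlamq : 0 < lamq)
    (hf : ContinuousOn f (sqD x0 y0 len))
    (hSlip : ∀ t₁ ∈ sqD x0 y0 len, ∀ t₂ ∈ sqD x0 y0 len, |S t₁ - S t₂| ≤ lamS * eudist t₁ t₂)
    (hS1 : ∀ t ∈ sqD x0 y0 len, |S t| < 1)
    (hqlip : ∀ t₁ ∈ sqD x0 y0 len, ∀ t₂ ∈ sqD x0 y0 len, |q t₁ - q t₂| ≤ lamq * eudist t₁ t₂)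
    (hself : ∀ w : Fin N × Fin N, ∀ t ∈ cell x0 y0 len N [w],
      f t = S t * f (LInv x0 y0 len N w t) + q t) :
    ∀ (n k : ℕ), 0 < n → 0 < k → ∀ w : Fin n → Fin N × Fin N,
      oscSum x0 y0 len N f (List.ofFn w) k ≤
        (∑ w' : Fin N × Fin N,
          supAbs S (cell x0 y0 len N (List.ofFn w ++ [w'])) *
            oscSum x0 y0 len N f ((List.ofFn w).tail ++ [w']) (k - 1))
        + Real.sqrt 2 * (2 * lamS * supAbs f (sqD x0 y0 len) + lamq) * len *
            (N : ℝ) ^ ((k : ℤ) - (n : ℤ)) := by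
  have hN0 : 0 < N := by omega
  have hN' : (0:ℝ) < N := by exact_mod_cast hN0
  set D := sqD x0 y0 len with hD
  have hDcomp : IsCompact D := isCompact_Icc.prod isCompact_Icc
  have hDne : D.Nonempty := cell_nonempty (N := N) hlen []
  set Mf := supAbs f D with hMfdef
  have hbddf : BddAbove ((fun t => |f t|) '' D) := hDcomp.bddAbove_image hf.abs
  have hMf : ∀ t ∈ D, |f t| ≤ Mf := fun t ht => le_csSup hbddf (Set.mem_image_of_mem _ ht)
  have hMf0 : 0 ≤ Mf := by
    obtain ⟨t0, ht0⟩ := hDne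
    exact (abs_nonneg _).trans (hMf t0 ht0)
  have hS1' : ∀ E : Set (ℝ × ℝ), E ⊆ D → ∀ t ∈ E, |S t| ≤ 1 :=
    fun E hE t ht => (hS1 t (hE ht)).le
  intro n k hn hk w
  obtain ⟨n', rfl⟩ : ∃ n', n = n' + 1 := ⟨n - 1, (Nat.succ_pred_eq_of_pos hn).symm⟩
  obtain ⟨m, rfl⟩ : ∃ m, k = m + 1 := ⟨k - 1, (Nat.succ_pred_eq_of_pos hk).symm⟩
  set W := List.ofFn w with hWdef
  set Wt := List.ofFn (fun i : Fin n' => w i.succ) with hWtdef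
  have hW : W = w 0 :: Wt := List.ofFn_succ (f := w)
  have htail : W.tail = Wt := by rw [hW, List.tail_cons]
  set L : ℕ := n' + 1 + (m + 1) with hLdef
  set c : ℝ := Real.sqrt 2 * (lamS * Mf + lamq) * len / N ^ L with hcdef
  have hc0 : 0 ≤ c := by
    have h1 : 0 ≤ lamS * Mf + lamq := by nlinarith
    have h2 : 0 ≤ Real.sqrt 2 := Real.sqrt_nonneg 2
    rw [hcdef]
    apply div_nonneg _ (by positivity)
    apply mul_nonneg (mul_nonneg h2 h1) hlen.le
  -- per cell claim
  have claim : ∀ v : Fin (m + 1) → (Fin N × Fin N),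
      oscil f (cell x0 y0 len N (W ++ List.ofFn v)) ≤
        supAbs S (cell x0 y0 len N (W ++ [v 0])) *
          oscil f (cell x0 y0 len N (Wt ++ List.ofFn v)) + c := by
    intro v
    set E := cell x0 y0 len N (W ++ List.ofFn v) with hEdef
    set E' := cell x0 y0 len N (Wt ++ List.ofFn v) with hE'def
    set E'' := cell x0 y0 len N (W ++ [v 0]) with hE''def
    have hESub : E ⊆ D := cell_subset_sqD hlen _
    have hE'Sub : E' ⊆ D := cell_subset_sqD hlen _
    have hE''Sub : E'' ⊆ D := cell_subset_sqD hlen _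
    have hE'ne : E'.Nonempty := cell_nonempty hlen _
    have hE''ne : E''.Nonempty := cell_nonempty hlen _
    have hmemE'' : E ⊆ E'' := by
      have : W ++ List.ofFn v = (W ++ [v 0]) ++ List.ofFn (fun i : Fin m => v i.succ) := by
        rw [List.ofFn_succ (f := v), List.append_assoc]
        rfl
      rw [hEdef, this]
      exact cell_append_subset hlen _ _
    have hcons : W ++ List.ofFn v = w 0 :: (Wt ++ List.ofFn v) := by
      rw [hW]; rfl
    have hEim : E = Lmap x0 y0 len N (w 0) '' E' := by rw [hEdef, hcons]; rfl
    have hhead : E ⊆ cell x0 y0 len N [w 0] := by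
      rw [hEim]
      exact Set.image_mono hE'Sub
    have hlen' : (W ++ List.ofFn v).length = L := by
      simp [hWdef, hLdef, List.length_append]
      omega
    have hsupS0 : 0 ≤ supAbs S E'' := supAbs_nonneg (hS1' E'' hE''Sub) hE''ne
    have hoscE'0 : 0 ≤ oscil f E' := oscil_nonneg (fun u hu => hMf u (hE'Sub hu)) hE'ne
    apply oscil_le (by positivity)
    intro s hs t ht
    have hsD : s ∈ D := hESub hs
    have htD : t ∈ D := hESub ht
    have hfs := hself (w 0) s (hhead hs)
    have hft := hself (w 0) t (hhead ht)
    set s' := LInv x0 y0 len N (w 0) s with hs'def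
    set t' := LInv x0 y0 len N (w 0) t with ht'def
    have hs'E' : s' ∈ E' := by
      rw [hs'def]
      exact mem_cell_cons hN0 (by rw [← hcons]; exact hs)
    have ht'E' : t' ∈ E' := by
      rw [ht'def]
      exact mem_cell_cons hN0 (by rw [← hcons]; exact ht)
    have hdist : eudist s t ≤ Real.sqrt 2 * len / N ^ L := by
      have := eudist_cell hlen hN0 hs ht
      rwa [hlen'] at this
    have hdist0 : 0 ≤ eudist s t := Real.sqrt_nonneg _
    have b1 : S s * (f s' - f t') ≤ supAbs S E'' * oscil f E' := by
      calc S s * (f s' - f t') ≤ |S s * (f s' - f t')| := le_abs_self _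
        _ = |S s| * |f s' - f t'| := abs_mul _ _
        _ ≤ supAbs S E'' * oscil f E' := by
            apply mul_le_mul (le_supAbs (hS1' E'' hE''Sub) (hmemE'' hs))
              (abs_sub_le_oscil (fun u hu => hMf u (hE'Sub hu)) hs'E' ht'E')
              (abs_nonneg _) hsupS0
    have b2 : (S s - S t) * f t' ≤ lamS * eudist s t * Mf := by
      calc (S s - S t) * f t' ≤ |(S s - S t) * f t'| := le_abs_self _
        _ = |S s - S t| * |f t'| := abs_mul _ _
        _ ≤ lamS * eudist s t * Mf := by
            apply mul_le_mul (hSlip s hsD t htD) (hMf t' (hE'Sub ht'E')) (abs_nonneg _)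
            positivity
    have b3 : q s - q t ≤ lamq * eudist s t :=
      (le_abs_self _).trans (hqlip s hsD t htD)
    have berr : lamS * eudist s t * Mf + lamq * eudist s t ≤ c := by
      have h1 : lamS * eudist s t * Mf + lamq * eudist s t
          = (lamS * Mf + lamq) * eudist s t := by ring
      have h2 : 0 ≤ lamS * Mf + lamq := by nlinarith
      have h3 : (lamS * Mf + lamq) * eudist s t ≤ (lamS * Mf + lamq) * (Real.sqrt 2 * len / N ^ L) :=
        mul_le_mul_of_nonneg_left hdist h2
      have h4 : (lamS * Mf + lamq) * (Real.sqrt 2 * len / N ^ L) = c := by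
        rw [hcdef]; ring
      linarith
    calc f s - f t = S s * (f s' - f t') + (S s - S t) * f t' + (q s - q t) := by
          rw [hfs, hft]; ring
      _ ≤ supAbs S E'' * oscil f E' + c := by linarith
  -- now sum over v
  rw [oscSum]
  have step1 : ∑ v : Fin (m + 1) → (Fin N × Fin N), oscil f (cell x0 y0 len N (W ++ List.ofFn v)) ≤
      (∑ v : Fin (m + 1) → (Fin N × Fin N), supAbs S (cell x0 y0 len N (W ++ [v 0])) *
        oscil f (cell x0 y0 len N (Wt ++ List.ofFn v)))
      + (Fintype.card (Fin (m + 1) → (Fin N × Fin N)) : ℝ) * c := by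
    calc ∑ v : Fin (m + 1) → (Fin N × Fin N), oscil f (cell x0 y0 len N (W ++ List.ofFn v))
        ≤ ∑ v : Fin (m + 1) → (Fin N × Fin N), (supAbs S (cell x0 y0 len N (W ++ [v 0])) *
            oscil f (cell x0 y0 len N (Wt ++ List.ofFn v)) + c) :=
          Finset.sum_le_sum fun v _ => claim v
      _ = _ := by
          rw [Finset.sum_add_distrib, Finset.sum_const, Finset.card_univ, nsmul_eq_mul]
  have step2 : ∑ v : Fin (m + 1) → (Fin N × Fin N), supAbs S (cell x0 y0 len N (W ++ [v 0])) *
        oscil f (cell x0 y0 len N (Wt ++ List.ofFn v))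
      = ∑ w' : (Fin N × Fin N), supAbs S (cell x0 y0 len N (W ++ [w'])) *
          oscSum x0 y0 len N f (Wt ++ [w']) m := by
    have e1 : ∑ v : Fin (m + 1) → (Fin N × Fin N), supAbs S (cell x0 y0 len N (W ++ [v 0])) *
        oscil f (cell x0 y0 len N (Wt ++ List.ofFn v))
        = ∑ p : (Fin N × Fin N) × (Fin m → (Fin N × Fin N)), supAbs S (cell x0 y0 len N (W ++ [p.1])) *
            oscil f (cell x0 y0 len N ((Wt ++ [p.1]) ++ List.ofFn p.2)) := by
      apply Eq.symm
      apply Fintype.sum_equiv (Fin.consEquiv fun _ : Fin (m + 1) => (Fin N × Fin N))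
      intro p
      have hz : (Fin.consEquiv fun _ : Fin (m + 1) => (Fin N × Fin N)) p 0 = p.1 := rfl
      have hofn : List.ofFn ((Fin.consEquiv fun _ : Fin (m + 1) => (Fin N × Fin N)) p)
          = p.1 :: List.ofFn p.2 := by
        rw [List.ofFn_succ]
        congr 1
      rw [hz, hofn, List.append_assoc]
      rfl
    rw [e1, Fintype.sum_prod_type]
    apply Finset.sum_congr rfl
    intro w' _
    simp only [oscSum, Finset.mul_sum]
  simp only [htail, Nat.add_sub_cancel]
  rw [step2] at step1
  refine step1.trans (add_le_add_right ?_ _)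
  -- error term
  have hcard : (Fintype.card (Fin (m + 1) → (Fin N × Fin N)) : ℝ) = ((N * N : ℕ) : ℝ) ^ (m + 1) := by
    simp [Fintype.card_fun]
  have hzpow : (N : ℝ) ^ ((↑(m + 1) : ℤ) - (↑(n' + 1) : ℤ)) =
      (N : ℝ) ^ (m + 1) / (N : ℝ) ^ (n' + 1) := by
    rw [zpow_sub₀ (by positivity : (N:ℝ) ≠ 0), zpow_natCast, zpow_natCast]
  rw [hzpow, hcard]
  have hkey : ((N * N : ℕ) : ℝ) ^ (m + 1) * c =
      Real.sqrt 2 * (lamS * Mf + lamq) * len * ((N : ℝ) ^ (m + 1) / (N : ℝ) ^ (n' + 1)) := by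
    rw [hcdef, hLdef]
    push_cast
    field_simp
    ring
  rw [hkey]
  have h2 : 0 ≤ (N : ℝ) ^ (m + 1) / (N : ℝ) ^ (n' + 1) := by positivity
  apply mul_le_mul_of_nonneg_right _ h2
  have : 0 ≤ Real.sqrt 2 * (lamS * Mf) := by positivity
  have hs2 : 0 ≤ Real.sqrt 2 := Real.sqrt_nonneg 2
  nlinarith [mul_nonneg (mul_nonneg hs2 (mul_nonneg hlamS.le hMf0)) hlen.le]
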